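/- For any finite simple graph G, |ker(G)| + |diadem(G)| ≤ 2α(G), where ker(G) is the intersection of all critical independent sets and diadem(G) is the union of all maximum critical independent sets. -/

import Mathlib

open Set

variable {V : Type*} [Fintype V]

/-- `S` is an independent set in `G`: no two of its vertices are adjacent. -/
def IsIndep (G : SimpleGraph V) (S : Set V) : Prop :=
  ∀ u ∈ S, ∀ v ∈ S, ¬ G.Adj u v

/-- The neighborhood `N(X)` of a set of vertices. -/
def nbhd (G : SimpleGraph V) (X : Set V) : Set V := {v | ∃ u ∈ X, G.Adj u v}

/-- The difference `d(X) = |X| - |N(X)|` computed in the induced subgraph `G[W]`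
(neighborhoods are intersected with `W`). -/
noncomputable def dOn (G : SimpleGraph V) (W X : Set V) : ℤ :=
  (X.ncard : ℤ) - ((nbhd G X ∩ W).ncard : ℤ)

/-- The difference `d(X) = |X| - |N(X)|` in `G`. -/
noncomputable def dG (G : SimpleGraph V) (X : Set V) : ℤ := dOn G Set.univ X

/-- `S` is a critical independent set of the induced subgraph `G[W]`:
it is an independent subset of `W` whose difference attains
`max {d(Y) : Y ⊆ W}` (the critical difference of `G[W]`). -/
def IsCritIndepOn (G : SimpleGraph V) (W S : Set V) : Prop :=
  S ⊆ W ∧ IsIndep G S ∧ ∀ Y ⊆ W, dOn G W Y ≤ dOn G W S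

/-- `S` is a critical independent set of `G`. -/
def IsCritIndep (G : SimpleGraph V) (S : Set V) : Prop := IsCritIndepOn G Set.univ S

/-- A maximum critical independent set of `G[W]`: a critical independent set of
largest cardinality. -/
def IsMaxCritIndepOn (G : SimpleGraph V) (W S : Set V) : Prop :=
  IsCritIndepOn G W S ∧ ∀ T, IsCritIndepOn G W T → T.ncard ≤ S.ncard

/-- A maximum critical independent set of `G`. -/
def IsMaxCritIndep (G : SimpleGraph V) (S : Set V) : Prop := IsMaxCritIndepOn G Set.univ S

/-- A maximum independent set of the induced subgraph `G[W]`. -/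
def IsMaxIndepOn (G : SimpleGraph V) (W S : Set V) : Prop :=
  S ⊆ W ∧ IsIndep G S ∧ ∀ T ⊆ W, IsIndep G T → T.ncard ≤ S.ncard

/-- A maximum independent set of `G`. -/
def IsMaxIndep (G : SimpleGraph V) (S : Set V) : Prop := IsMaxIndepOn G Set.univ S

/-- The independence number of the induced subgraph `G[W]`. -/
noncomputable def alphaOn (G : SimpleGraph V) (W : Set V) : ℕ :=
  sSup {n | ∃ S ⊆ W, IsIndep G S ∧ S.ncard = n}

/-- The independence number `α(G)`. -/
noncomputable def alpha (G : SimpleGraph V) : ℕ := alphaOn G Set.univ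

/-- The maximum matching number `μ(G)`. -/
noncomputable def mu (G : SimpleGraph V) : ℕ :=
  sSup {n | ∃ M : G.Subgraph, M.IsMatching ∧ M.edgeSet.ncard = n}

/-- `G` is a König-Egerváry graph: `α(G) + μ(G) = |V(G)|`. -/
def IsKE (G : SimpleGraph V) : Prop := alpha G + mu G = Fintype.card V

/-- `nucleus(G[W])`: intersection of all maximum critical independent sets of `G[W]`. -/
def nucleusOn (G : SimpleGraph V) (W : Set V) : Set V := ⋂₀ {S | IsMaxCritIndepOn G W S}

/-- `nucleus(G)`. -/
def nucleus (G : SimpleGraph V) : Set V := nucleusOn G Set.univ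

/-- `diadem(G[W])`: union of all maximum critical independent sets of `G[W]`. -/
def diademOn (G : SimpleGraph V) (W : Set V) : Set V := ⋃₀ {S | IsMaxCritIndepOn G W S}

/-- `diadem(G)`. -/
def diadem (G : SimpleGraph V) : Set V := diademOn G Set.univ

/-- `ker(G)`: intersection of all critical independent sets of `G`. -/
def kerG (G : SimpleGraph V) : Set V := ⋂₀ {S | IsCritIndep G S}

/-- `core(G)`: intersection of all maximum independent sets of `G`. -/
def core (G : SimpleGraph V) : Set V := ⋂₀ {S | IsMaxIndep G S}

/-- `corona(G)`: union of all maximum independent sets of `G`. -/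
def corona (G : SimpleGraph V) : Set V := ⋃₀ {S | IsMaxIndep G S}

/-!
Let `A` be a maximum critical independent set. Then `ker G ⊆ A`, and every maximum critical
independent set `B` satisfies `B \ N(A) ⊆ A`, because `A ∪ (B \ N(A))` is again critical
independent. Hence `diadem G` is `A` together with a part `E` of `N(A)`. Criticality of `A`
gives the Hall condition `|E| ≤ |A ∩ N(E)|`, and `A ∩ N(E)` avoids `ker G` since every vertex
of `E` lies in an independent set containing `ker G`. So
`|ker G| + |diadem G| ≤ |ker G| + |A| + |A \ ker G| = 2|A| ≤ 2α(G)`.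
-/

variable {G : SimpleGraph V}

omit [Fintype V] in
lemma nbhd_mono {X Y : Set V} (h : X ⊆ Y) : nbhd G X ⊆ nbhd G Y := by
  rintro v ⟨u, hu, huv⟩
  exact ⟨u, h hu, huv⟩

omit [Fintype V] in
lemma nbhd_union (X Y : Set V) : nbhd G (X ∪ Y) = nbhd G X ∪ nbhd G Y := by
  ext v
  simp only [nbhd, mem_union, mem_ofPred_eq, or_and_right, exists_or]

omit [Fintype V] in
lemma IsIndep.disjoint_nbhd {S : Set V} (h : IsIndep G S) : Disjoint S (nbhd G S) :=
  disjoint_left.mpr fun v hv ⟨u, hu, huv⟩ => h u hu v hv huv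

omit [Fintype V] in
lemma dG_eq (X : Set V) : dG G X = (X.ncard : ℤ) - (nbhd G X).ncard := by
  simp [dG, dOn]

lemma dG_add_dG_le_dG_union_add_dG_inter (X Y : Set V) :
    dG G X + dG G Y ≤ dG G (X ∪ Y) + dG G (X ∩ Y) := by
  have hcard := ncard_union_add_ncard_inter X Y
  have hnbhd := ncard_union_add_ncard_inter (nbhd G X) (nbhd G Y)
  have hinter : (nbhd G (X ∩ Y)).ncard ≤ (nbhd G X ∩ nbhd G Y).ncard :=
    ncard_le_ncard (subset_inter (nbhd_mono inter_subset_left) (nbhd_mono inter_subset_right))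
  simp only [dG_eq, nbhd_union]
  omega

omit [Fintype V] in
lemma isIndep_sdiff_nbhd (Y : Set V) : IsIndep G (Y \ nbhd G Y) :=
  fun u hu _ hv huv => hv.2 ⟨u, hu.1, huv⟩

lemma dG_le_dG_sdiff_nbhd (Y : Set V) : dG G Y ≤ dG G (Y \ nbhd G Y) := by
  have hcard := ncard_inter_add_ncard_sdiff_eq_ncard Y (nbhd G Y)
  have hdisj : Disjoint (nbhd G (Y \ nbhd G Y)) (Y ∩ nbhd G Y) :=
    disjoint_left.mpr fun v ⟨u, hu, huv⟩ hv => hu.2 ⟨v, hv.1, huv.symm⟩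
  have hnbhd : (nbhd G (Y \ nbhd G Y)).ncard + (Y ∩ nbhd G Y).ncard ≤ (nbhd G Y).ncard := by
    rw [← ncard_union_eq hdisj]
    exact ncard_le_ncard (union_subset (nbhd_mono sdiff_subset) inter_subset_right)
  rw [dG_eq, dG_eq]
  omega

def IsCritical (G : SimpleGraph V) (S : Set V) : Prop := ∀ Y, dG G Y ≤ dG G S

omit [Fintype V] in
lemma isCritIndep_iff {S : Set V} : IsCritIndep G S ↔ IsIndep G S ∧ IsCritical G S :=
  ⟨fun h => ⟨h.2.1, fun Y => h.2.2 Y (subset_univ Y)⟩,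
    fun h => ⟨subset_univ S, h.1, fun Y _ => h.2 Y⟩⟩

lemma IsCritical.union {X Y : Set V} (hX : IsCritical G X) (hY : IsCritical G Y) :
    IsCritical G (X ∪ Y) := fun Z => by
  have := dG_add_dG_le_dG_union_add_dG_inter (G := G) X Y
  have := hX (X ∩ Y)
  have := hY Z
  omega

lemma exists_isCritIndep (G : SimpleGraph V) : ∃ S, IsCritIndep G S := by
  obtain ⟨Y, hY⟩ := Finite.exists_max (dG G)
  exact ⟨_, isCritIndep_iff.mpr
    ⟨isIndep_sdiff_nbhd Y, fun Z => (hY Z).trans (dG_le_dG_sdiff_nbhd Y)⟩⟩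

/-- Hall's condition for matching `N(S)` into `S`. -/
lemma IsCritical.ncard_le_ncard_inter_nbhd {S W : Set V} (hS : IsCritical G S)
    (hW : W ⊆ nbhd G S) : W.ncard ≤ (S ∩ nbhd G W).ncard := by
  have hsplit := ncard_inter_add_ncard_sdiff_eq_ncard S (nbhd G W)
  have hsub : nbhd G (S \ nbhd G W) ⊆ nbhd G S \ W :=
    fun v ⟨u, hu, huv⟩ => ⟨⟨u, hu.1, huv⟩, fun hv => hu.2 ⟨v, hv, huv.symm⟩⟩
  have hle := ncard_le_ncard hsub
  have hW' := ncard_sdiff_add_ncard_of_subset hW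
  have hcrit := hS (S \ nbhd G W)
  rw [dG_eq, dG_eq] at hcrit
  omega

/-- Cutting `R = Y ∩ N(X)` off `X ∪ Y` loses the neighbours in `X ∩ N(R)`, none of which is
adjacent to `X ∪ (Y \ N(X))`, and there are at least `|R|` of them by the Hall condition. -/
lemma IsCritical.dG_union_le {X : Set V} (hXi : IsIndep G X) (hXc : IsCritical G X)
    (Y : Set V) :
    dG G (X ∪ Y) ≤ dG G (X ∪ (Y \ nbhd G X)) := by
  set Z := X ∪ (Y \ nbhd G X)
  set R := Y ∩ nbhd G X
  have hZR : Z ∪ R = X ∪ Y := by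
    ext v
    by_cases hv : v ∈ nbhd G X <;> simp [Z, R, hv]
  have hdisj : Disjoint Z R := by
    refine disjoint_left.mpr ?_
    rintro v (hv | hv) hvR
    · exact hXi.disjoint_nbhd.ne_of_mem hv hvR.2 rfl
    · exact hv.2 hvR.2
  have hXZ : Disjoint (nbhd G Z) (X ∩ nbhd G R) := by
    refine disjoint_left.mpr ?_
    rintro x ⟨z, hz | hz, hzx⟩ ⟨hx, -⟩
    · exact hXi z hz x hx hzx
    · exact hz.2 ⟨x, hx, hzx.symm⟩
  have hN : (nbhd G Z).ncard + (X ∩ nbhd G R).ncard ≤ (nbhd G (X ∪ Y)).ncard := by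
    rw [← ncard_union_eq hXZ, ← hZR, nbhd_union Z R]
    exact ncard_le_ncard (union_subset_union_right _ inter_subset_right)
  have hR := hXc.ncard_le_ncard_inter_nbhd (W := R) inter_subset_right
  have hcard := ncard_union_eq hdisj
  rw [hZR] at hcard
  rw [dG_eq, dG_eq]
  omega

lemma IsCritIndep.union_sdiff_nbhd {X Y : Set V} (hX : IsCritIndep G X)
    (hY : IsCritIndep G Y) : IsCritIndep G (X ∪ (Y \ nbhd G X)) := by
  obtain ⟨hXi, hXc⟩ := isCritIndep_iff.mp hX
  obtain ⟨hYi, hYc⟩ := isCritIndep_iff.mp hY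
  refine isCritIndep_iff.mpr
    ⟨?_, fun W => ((hXc.union hYc) W).trans (hXc.dG_union_le hXi Y)⟩
  rintro u (hu | hu) v (hv | hv) huv
  · exact hXi u hu v hv huv
  · exact hv.2 ⟨u, hu, huv⟩
  · exact hu.2 ⟨v, hv, huv.symm⟩
  · exact hYi u hu.1 v hv.1 huv

lemma exists_isMaxCritIndep (G : SimpleGraph V) : ∃ A, IsMaxCritIndep G A := by
  obtain ⟨S, hS⟩ := exists_isCritIndep G
  have : Nonempty {S : Set V // IsCritIndep G S} := ⟨⟨S, hS⟩⟩
  obtain ⟨⟨A, hA⟩, hmax⟩ :=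
    Finite.exists_max fun S : {S : Set V // IsCritIndep G S} => S.1.ncard
  exact ⟨A, hA, fun T hT => hmax ⟨T, hT⟩⟩

omit [Fintype V] in
lemma kerG_subset {S : Set V} (hS : IsCritIndep G S) : kerG G ⊆ S :=
  sInter_subset_of_mem hS

omit [Fintype V] in
lemma disjoint_kerG_nbhd_diadem : Disjoint (kerG G) (nbhd G (diadem G)) :=
  disjoint_left.mpr fun v hv ⟨u, ⟨_, hB, huB⟩, huv⟩ =>
    hB.1.2.1 u huB v (kerG_subset hB.1 hv) huv

lemma IsMaxCritIndep.sdiff_nbhd_subset {A B : Set V} (hA : IsMaxCritIndep G A)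
    (hB : IsCritIndep G B) : B \ nbhd G A ⊆ A := by
  have hAB : IsCritIndep G (A ∪ (B \ nbhd G A)) := IsCritIndep.union_sdiff_nbhd hA.1 hB
  have hEq : A = A ∪ (B \ nbhd G A) := eq_of_subset_of_ncard_le subset_union_left (hA.2 _ hAB)
  exact subset_union_right.trans hEq.symm.subset

lemma IsMaxCritIndep.diadem_subset {A : Set V} (hA : IsMaxCritIndep G A) :
    diadem G ⊆ A ∪ nbhd G A := by
  rintro x ⟨B, hB, hxB⟩
  by_cases hx : x ∈ nbhd G A
  · exact Or.inr hx
  · exact Or.inl (hA.sdiff_nbhd_subset hB.1 ⟨hxB, hx⟩)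

lemma IsMaxCritIndep.ncard_kerG_add_ncard_diadem_le {A : Set V} (hA : IsMaxCritIndep G A) :
    (kerG G).ncard + (diadem G).ncard ≤ 2 * A.ncard := by
  set E := diadem G ∩ nbhd G A
  have hD : diadem G = A ∪ E := by
    refine subset_antisymm (fun x hx => ?_)
      (union_subset (subset_sUnion_of_mem hA) inter_subset_left)
    exact (hA.diadem_subset hx).imp id fun h => ⟨hx, h⟩
  have hdisj : Disjoint A E := hA.1.2.1.disjoint_nbhd.mono_right inter_subset_right
  have hE := IsCritical.ncard_le_ncard_inter_nbhd (isCritIndep_iff.mp hA.1).2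
    (W := E) inter_subset_right
  have hAE : A ∩ nbhd G E ⊆ A \ kerG G := fun v hv =>
    ⟨hv.1, fun hk =>
      disjoint_kerG_nbhd_diadem.ne_of_mem hk (nbhd_mono inter_subset_left hv.2) rfl⟩
  have hK := ncard_sdiff_add_ncard_of_subset (kerG_subset hA.1)
  have := ncard_le_ncard hAE
  rw [hD, ncard_union_eq hdisj]
  omega

lemma ncard_le_alpha {S : Set V} (hS : IsIndep G S) : S.ncard ≤ alpha G :=
  le_csSup ⟨Nat.card V, by rintro n ⟨T, -, -, rfl⟩; exact ncard_le_card T⟩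
    ⟨S, subset_univ S, hS, rfl⟩

/-- For any graph `G`, `|ker(G)| + |diadem(G)| ≤ 2α(G)`. -/
theorem stmt15 (G : SimpleGraph V) :
    (kerG G).ncard + (diadem G).ncard ≤ 2 * alpha G := by
  obtain ⟨A, hA⟩ := exists_isMaxCritIndep G
  calc (kerG G).ncard + (diadem G).ncard ≤ 2 * A.ncard := hA.ncard_kerG_add_ncard_diadem_le
    _ ≤ 2 * alpha G := Nat.mul_le_mul_left 2 (ncard_le_alpha hA.1.2.1)
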